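/- arXiv:0806.2514 — 2 statements merged into one kernel-verified Lean document; each statement's English description precedes it below -/
import Mathlib

section
/- Let a_1,...,a_n and a_1*,...,a_n* be 2n Grassmann generators and let M be an n×n matrix over a field K of characteristic zero. Set f = Σ_{i,j} M_{ij} a_i a_j*. Then the iterated Berezin integral ∫ exp(f) da_n* da_n ⋯ da_1* da_1 equals det(M). -/
/-!
Write `f = ∑ᵢ rᵢ` with `rᵢ = aᵢ ψ(Mᵢ)`, where `ψ(w) = ∑ⱼ wⱼ aⱼ*`. The `rᵢ` are even, hence
commute, and square to zero, so `exp f = ∏ᵢ (1 + rᵢ)`. Integrating over `aᵢ` kills everything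
not involving `aᵢ`, so of the expanded product only `∏ᵢ rᵢ` survives. As a function of the rows
of `M` this product is alternating (a repeated row `w` gives a factor `aᵢ ψ(w) aⱼ ψ(w) = 0`), hence
equals `det M • ∏ᵢ aᵢ aᵢ*`, and the iterated integral of `∏ᵢ aᵢ aᵢ*` is `1`.
-/

noncomputable section

/-- The Grassmann algebra on generators indexed by `I` (the exterior algebra of `K^I`). -/
abbrev Gr (K : Type) [Field K] (I : Type) : Type := ExteriorAlgebra K (I → K)

/-- The Grassmann generator with index `x`. -/
def gen (K : Type) [Field K] (I : Type) [DecidableEq I] (x : I) : Gr K I :=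
  ExteriorAlgebra.ι K (Pi.single x 1)

/-- The subalgebra of elements not involving the generator `a_t`. -/
def notInvolving (K : Type) [Field K] (I : Type) [DecidableEq I] (t : I) :
    Subalgebra K (Gr K I) :=
  Algebra.adjoin K {y | ∃ u : I, u ≠ t ∧ y = gen K I u}

/-- `B` is a family of Berezin integrals: `B t` extracts the coefficient `h` from the
(unique) decomposition `f = g + h * a_t` with `g, h` not involving `a_t`.  This encodes
`∫ da_t = 0`, `∫ a_t da_t = 1` and the module property `∫ g h da_t = g ∫ h da_t` for `g`
not involving `a_t`. -/
def IsBerezinFamily (K : Type) [Field K] (I : Type) [DecidableEq I]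
    (B : I → (Gr K I →ₗ[K] Gr K I)) : Prop :=
  ∀ t : I, ∀ g h : Gr K I, g ∈ notInvolving K I t → h ∈ notInvolving K I t →
    B t (g + h * gen K I t) = h

/-- The exponential, defined by the Taylor series truncated at `m` terms (for nilpotent
arguments and `m` large enough this is the full, terminating, series). -/
def gexp (K : Type) [Field K] (I : Type) (m : ℕ) (x : Gr K I) : Gr K I :=
  ∑ k ∈ Finset.range m, ((k.factorial : K))⁻¹ • x ^ k

namespace IsNilpotent

variable {A : Type*} [Ring A] [Module ℚ A]

theorem exp_eq_one_add_of_mul_self_eq_zero {a : A} (h : a * a = 0) : exp a = 1 + a := by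
  rw [exp_eq_sum (k := 2) (by rwa [sq])]
  simp [Finset.sum_range_succ]

theorem exp_sum_fin {n : ℕ} (x : Fin n → A) (hc : ∀ i j, Commute (x i) (x j))
    (hx : ∀ i, IsNilpotent (x i)) : exp (∑ i, x i) = (List.ofFn fun i => exp (x i)).prod := by
  induction n with
  | zero => simp [exp_zero]
  | succ n ih =>
    rw [Fin.sum_univ_succ, List.ofFn_succ, List.prod_cons,
      exp_add_of_commute (Commute.sum_right _ _ _ fun i _ => hc 0 i.succ) (hx 0)
        (Commute.isNilpotent_sum (fun i _ => hx i.succ) fun i j _ _ => hc i.succ j.succ),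
      ih _ (fun i j => hc i.succ j.succ) fun i => hx i.succ]

end IsNilpotent

theorem sum_fin_pow_succ_eq_zero_of_mul_self_eq_zero {A : Type*} [Ring A] {n : ℕ}
    (x : Fin n → A) (hc : ∀ i j, Commute (x i) (x j)) (hx : ∀ i, x i * x i = 0) :
    (∑ i, x i) ^ (n + 1) = 0 := by
  induction n with
  | zero => simp
  | succ n ih =>
    rw [Fin.sum_univ_succ]
    exact (Commute.sum_right _ _ _ fun i _ => hc 0 i.succ)
      |>.add_pow_eq_zero_of_add_le_succ_of_pow_eq_zero (by rw [sq, hx 0])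
        (ih _ (fun i j => hc i.succ j.succ) fun i => hx i.succ) (by omega)

theorem List.prod_ofFn_eq_zero_of_commute {M : Type*} [MonoidWithZero M] {n : ℕ} (x : Fin n → M)
    (hc : ∀ i j, Commute (x i) (x j)) {i j : Fin n} (hij : i ≠ j) (h : x i * x j = 0) :
    (List.ofFn x).prod = 0 := by
  classical
  have hc' : ((Finset.univ : Finset (Fin n)) : Set (Fin n)).Pairwise (Function.onFun Commute x) :=
    fun a _ b _ _ => hc a b
  have hprod : (List.ofFn x).prod = Finset.univ.noncommProd x hc' := by
    simp only [Finset.noncommProd, Fin.univ_val_map, Multiset.noncommProd_coe]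
  rw [hprod, ← Finset.mul_noncommProd_erase _ (Finset.mem_univ i),
    ← Finset.mul_noncommProd_erase _ (Finset.mem_erase.2 ⟨hij.symm, Finset.mem_univ j⟩) x
      fun a _ b _ _ => hc a b,
    ← mul_assoc, h, zero_mul]

theorem AlternatingMap.apply_eq_det_smul {R M N ι : Type*} [CommRing R] [AddCommGroup M]
    [Module R M] [AddCommGroup N] [Module R N] [DecidableEq ι] [Fintype ι]
    (e : Module.Basis ι R M) (f : M [⋀^ι]→ₗ[R] N) (v : ι → M) : f v = e.det v • f e := by
  suffices h : f = e.det.smulRight (f e) from DFunLike.congr_fun h v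
  refine e.ext_alternating fun i hi => ?_
  let σ : Equiv.Perm ι := Equiv.ofBijective i (Finite.injective_iff_bijective.1 hi)
  change f (e ∘ σ) = (e.det.smulRight (f e)) (e ∘ σ)
  simp [AlternatingMap.map_perm, Module.Basis.det_self]

theorem gexp_eq_exp {K : Type} [Field K] [CharZero K] {I : Type} {m : ℕ} {x : Gr K I}
    (hx : x ^ m = 0) : gexp K I m x = IsNilpotent.exp x := by
  rw [IsNilpotent.exp_eq_sum hx, gexp]
  refine Finset.sum_congr rfl fun k _ => ?_
  rw [← algebraMap_smul K ((k.factorial : ℚ)⁻¹), map_inv₀, map_natCast]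

theorem gexp_sum_fin_eq_prod_one_add {K : Type} [Field K] [CharZero K] {I : Type} {n m : ℕ}
    (x : Fin n → Gr K I) (hc : ∀ i j, Commute (x i) (x j)) (hx : ∀ i, x i * x i = 0)
    (hm : n < m) : gexp K I m (∑ i, x i) = (List.ofFn fun i => 1 + x i).prod := by
  rw [gexp_eq_exp (pow_eq_zero_of_le hm (sum_fin_pow_succ_eq_zero_of_mul_self_eq_zero x hc hx)),
    IsNilpotent.exp_sum_fin x hc fun i => ⟨2, by rw [sq, hx i]⟩]
  simp only [IsNilpotent.exp_eq_one_add_of_mul_self_eq_zero (hx _)]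

namespace ExteriorAlgebra

open CliffordAlgebra (involute involute_ι)

variable {R M : Type*} [CommRing R] [AddCommGroup M] [Module R M]

theorem ι_mul_eq_involute_mul_ι (v : M) (x : ExteriorAlgebra R M) :
    ι R v * x = involute x * ι R v := by
  induction x using ExteriorAlgebra.induction with
  | algebraMap r => rw [AlgHom.commutes, Algebra.commutes]
  | ι w => rw [involute_ι, neg_mul, eq_neg_iff_add_eq_zero, ι_add_mul_swap]
  | mul x y hx hy => rw [map_mul, ← mul_assoc, hx, mul_assoc, hy, mul_assoc]
  | add x y hx hy => rw [map_add, mul_add, hx, hy, add_mul]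

theorem commute_ι_mul_ι (u w u' w' : M) : Commute (ι R u * ι R w) (ι R u' * ι R w') := by
  have heven : involute (ι R u' * ι R w') = ι R u' * ι R w' := by
    rw [map_mul, involute_ι, involute_ι, neg_mul_neg]
  refine Commute.mul_left ?_ ?_ <;>
    · show _ = _
      rw [ι_mul_eq_involute_mul_ι, heven]

theorem ι_mul_ι_mul_ι_mul_ι_self (u w u' : M) : ι R u * ι R w * (ι R u' * ι R w) = 0 := by
  rw [mul_assoc, ← mul_assoc (ι R w), ι_mul_eq_involute_mul_ι w (ι R u'), involute_ι, mul_assoc,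
    ι_sq_zero, mul_zero, mul_zero]

end ExteriorAlgebra

section Grassmann

open CliffordAlgebra (involute)

variable {K : Type} [Field K] {I : Type} [DecidableEq I]

theorem gen_mul_self (t : I) : gen K I t * gen K I t = 0 := ExteriorAlgebra.ι_sq_zero _

theorem involute_gen (t : I) : involute (gen K I t) = -gen K I t := CliffordAlgebra.involute_ι _

theorem gen_mul_eq_involute_mul_gen (t : I) (x : Gr K I) :
    gen K I t * x = involute x * gen K I t :=
  ExteriorAlgebra.ι_mul_eq_involute_mul_ι _ _

theorem gen_mem_notInvolving {u t : I} (h : u ≠ t) : gen K I u ∈ notInvolving K I t :=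
  Algebra.subset_adjoin ⟨u, h, rfl⟩

theorem notInvolving_eq_adjoin (t : I) :
    notInvolving K I t = Algebra.adjoin K (gen K I '' {t}ᶜ) := by
  simp only [notInvolving, Set.image, Set.mem_compl_singleton_iff, eq_comm]

theorem adjoin_gen_le_notInvolving {S : Set I} {t : I} (ht : t ∉ S) :
    Algebra.adjoin K (gen K I '' S) ≤ notInvolving K I t :=
  Algebra.adjoin_le <| by
    rintro _ ⟨u, hu, rfl⟩
    exact gen_mem_notInvolving (ne_of_mem_of_not_mem hu ht)

theorem adjoin_range_gen [Fintype I] : Algebra.adjoin K (Set.range (gen K I)) = ⊤ := by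
  refine eq_top_iff.2 (le_of_eq_of_le CliffordAlgebra.adjoin_range_ι.symm (Algebra.adjoin_le ?_))
  rintro _ ⟨v, rfl⟩
  rw [← (Pi.basisFun K I).sum_repr v, map_sum]
  exact Subalgebra.sum_mem _ fun u _ => by
    rw [map_smul, Pi.basisFun_apply]
    exact Subalgebra.smul_mem _ (Algebra.subset_adjoin (Set.mem_range_self (f := gen K I) u)) _

theorem involute_mem_adjoin_gen {S : Set I} {x : Gr K I}
    (hx : x ∈ Algebra.adjoin K (gen K I '' S)) : involute x ∈ Algebra.adjoin K (gen K I '' S) := by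
  induction hx using Algebra.adjoin_induction with
  | mem y hy =>
    obtain ⟨u, hu, rfl⟩ := hy
    rw [involute_gen]
    exact neg_mem (Algebra.subset_adjoin ⟨u, hu, rfl⟩)
  | algebraMap r => rw [AlgHom.commutes]; exact Subalgebra.algebraMap_mem _ r
  | add x y _ _ hx hy => rw [map_add]; exact add_mem hx hy
  | mul x y _ _ hx hy => rw [map_mul]; exact mul_mem hx hy

theorem exists_eq_add_mul_gen {S : Set I} (t : I) {x : Gr K I}
    (hx : x ∈ Algebra.adjoin K (gen K I '' S)) :
    ∃ g ∈ Algebra.adjoin K (gen K I '' (S \ {t})), ∃ h ∈ Algebra.adjoin K (gen K I '' (S \ {t})),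
      x = g + h * gen K I t := by
  induction hx using Algebra.adjoin_induction with
  | mem y hy =>
    obtain ⟨u, hu, rfl⟩ := hy
    by_cases hut : u = t
    · exact ⟨0, zero_mem _, 1, one_mem _, by simp [hut]⟩
    · exact ⟨gen K I u, Algebra.subset_adjoin ⟨u, ⟨hu, hut⟩, rfl⟩, 0, zero_mem _, by simp⟩
  | algebraMap r => exact ⟨algebraMap K _ r, Subalgebra.algebraMap_mem _ r, 0, zero_mem _, by simp⟩
  | add x y _ _ hx hy =>
    obtain ⟨g₁, hg₁, h₁, hh₁, rfl⟩ := hx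
    obtain ⟨g₂, hg₂, h₂, hh₂, rfl⟩ := hy
    exact ⟨g₁ + g₂, add_mem hg₁ hg₂, h₁ + h₂, add_mem hh₁ hh₂, by rw [add_mul]; abel⟩
  | mul x y _ _ hx hy =>
    obtain ⟨g₁, hg₁, h₁, hh₁, rfl⟩ := hx
    obtain ⟨g₂, hg₂, h₂, hh₂, rfl⟩ := hy
    refine ⟨g₁ * g₂, mul_mem hg₁ hg₂, g₁ * h₂ + h₁ * involute g₂,
      add_mem (mul_mem hg₁ hh₂) (mul_mem hh₁ (involute_mem_adjoin_gen hg₂)), ?_⟩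
    have hh₂t : gen K I t * (h₂ * gen K I t) = 0 := by
      rw [← mul_assoc, gen_mul_eq_involute_mul_gen, mul_assoc, gen_mul_self, mul_zero]
    calc (g₁ + h₁ * gen K I t) * (g₂ + h₂ * gen K I t)
        = g₁ * g₂ + g₁ * h₂ * gen K I t + h₁ * (gen K I t * g₂)
          + h₁ * (gen K I t * (h₂ * gen K I t)) := by noncomm_ring
      _ = g₁ * g₂ + (g₁ * h₂ + h₁ * involute g₂) * gen K I t := by
        rw [hh₂t, gen_mul_eq_involute_mul_gen]; noncomm_ring

end Grassmann

namespace IsBerezinFamily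

variable {K : Type} [Field K] {I : Type} [DecidableEq I] {B : I → (Gr K I →ₗ[K] Gr K I)}
  (hB : IsBerezinFamily K I B)
include hB

theorem apply_eq_zero {t : I} {x : Gr K I} (hx : x ∈ notInvolving K I t) : B t x = 0 := by
  simpa using hB t x 0 hx (zero_mem _)

theorem apply_mul_gen {t : I} {x : Gr K I} (hx : x ∈ notInvolving K I t) :
    B t (x * gen K I t) = x := by
  simpa using hB t 0 x (zero_mem _) hx

theorem apply_mem_notInvolving {t u : I} {x : Gr K I} (hx : x ∈ notInvolving K I u) :
    B t x ∈ notInvolving K I u := by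
  rw [notInvolving_eq_adjoin] at hx
  obtain ⟨g, hg, h, hh, rfl⟩ := exists_eq_add_mul_gen t hx
  have hsub : ∀ w ∈ ({t, u} : Set I),
      Algebra.adjoin K (gen K I '' ({u}ᶜ \ {t})) ≤ notInvolving K I w := fun w hw =>
    adjoin_gen_le_notInvolving fun hw' => by aesop
  rw [hB t g h (hsub t (by simp) hg) (hsub t (by simp) hh)]
  exact hsub u (by simp) hh

theorem apply_mul_left [Fintype I] {t : I} {g : Gr K I} (hg : g ∈ notInvolving K I t)
    (x : Gr K I) : B t (g * x) = g * B t x := by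
  have hx : x ∈ Algebra.adjoin K (gen K I '' Set.univ) := by
    rw [Set.image_univ, adjoin_range_gen]; exact Algebra.mem_top
  obtain ⟨x₀, hx₀, x₁, hx₁, rfl⟩ := exists_eq_add_mul_gen t hx
  have hsub := adjoin_gen_le_notInvolving (K := K) (S := Set.univ \ {t}) (t := t) (by simp)
  rw [mul_add, ← mul_assoc, hB t _ _ (hsub hx₀) (hsub hx₁),
    hB t _ _ (mul_mem hg (hsub hx₀)) (mul_mem hg (hsub hx₁))]

end IsBerezinFamily

section IteratedIntegral

variable {K : Type} [Field K] {J : Type}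

def iteratedBerezin (B : J ⊕ J → (Gr K (J ⊕ J) →ₗ[K] Gr K (J ⊕ J))) (l : List J) :
    Gr K (J ⊕ J) →ₗ[K] Gr K (J ⊕ J) :=
  l.foldr (fun i F => B (Sum.inl i) ∘ₗ B (Sum.inr i) ∘ₗ F) LinearMap.id

variable {B : J ⊕ J → (Gr K (J ⊕ J) →ₗ[K] Gr K (J ⊕ J))}

theorem iteratedBerezin_cons (i : J) (l : List J) (x : Gr K (J ⊕ J)) :
    iteratedBerezin B (i :: l) x = B (Sum.inl i) (B (Sum.inr i) (iteratedBerezin B l x)) := rfl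

theorem foldr_eq_iteratedBerezin (l : List J) (x : Gr K (J ⊕ J)) :
    l.foldr (fun i acc => B (Sum.inl i) (B (Sum.inr i) acc)) x = iteratedBerezin B l x := by
  induction l with
  | nil => rfl
  | cons i l ih => rw [List.foldr_cons, ih, iteratedBerezin_cons]

variable [DecidableEq J] (hB : IsBerezinFamily K (J ⊕ J) B)
include hB

theorem IsBerezinFamily.iteratedBerezin_mem_notInvolving {u : J ⊕ J} (l : List J)
    {x : Gr K (J ⊕ J)} (hx : x ∈ notInvolving K (J ⊕ J) u) :
    iteratedBerezin B l x ∈ notInvolving K (J ⊕ J) u := by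
  induction l with
  | nil => exact hx
  | cons i l ih => exact hB.apply_mem_notInvolving (hB.apply_mem_notInvolving ih)

theorem IsBerezinFamily.iteratedBerezin_eq_zero {i : J} {l : List J} (hi : i ∈ l)
    {x : Gr K (J ⊕ J)} (hx : x ∈ notInvolving K (J ⊕ J) (Sum.inl i)) :
    iteratedBerezin B l x = 0 := by
  induction l with
  | nil => simp at hi
  | cons j l ih =>
    rw [iteratedBerezin_cons]
    by_cases hil : i ∈ l
    · rw [ih hil, map_zero, map_zero]
    · obtain rfl : i = j := List.mem_cons.1 hi |>.resolve_right hil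
      exact hB.apply_eq_zero
        (hB.apply_mem_notInvolving (hB.iteratedBerezin_mem_notInvolving l hx))

theorem IsBerezinFamily.iteratedBerezin_mul_left [Fintype J] {l : List J} {g : Gr K (J ⊕ J)}
    (hg : ∀ j ∈ l, g ∈ notInvolving K (J ⊕ J) (Sum.inl j) ∧
      g ∈ notInvolving K (J ⊕ J) (Sum.inr j)) (x : Gr K (J ⊕ J)) :
    iteratedBerezin B l (g * x) = g * iteratedBerezin B l x := by
  induction l with
  | nil => rfl
  | cons i l ih =>
    obtain ⟨hgl, hgr⟩ := hg i List.mem_cons_self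
    rw [iteratedBerezin_cons, iteratedBerezin_cons, ih fun j hj => hg j (List.mem_cons_of_mem i hj),
      hB.apply_mul_left hgr, hB.apply_mul_left hgl]

theorem IsBerezinFamily.iteratedBerezin_prod_gen_mul_gen [Fintype J] {l : List J}
    (hl : l.Nodup) :
    iteratedBerezin B l
      (l.map fun i => gen K (J ⊕ J) (Sum.inl i) * gen K (J ⊕ J) (Sum.inr i)).prod = 1 := by
  induction l with
  | nil => rfl
  | cons i l ih =>
    obtain ⟨hil, hl⟩ := List.nodup_cons.1 hl
    have hpair : ∀ j ∈ l, ∀ u ∈ ({Sum.inl j, Sum.inr j} : Set (J ⊕ J)),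
        gen K (J ⊕ J) (Sum.inl i) * gen K (J ⊕ J) (Sum.inr i) ∈ notInvolving K (J ⊕ J) u :=
      fun j hj u hu => mul_mem (gen_mem_notInvolving (by aesop)) (gen_mem_notInvolving (by aesop))
    rw [List.map_cons, List.prod_cons, iteratedBerezin_cons,
      hB.iteratedBerezin_mul_left (fun j hj => ⟨hpair j hj _ (by simp), hpair j hj _ (by simp)⟩),
      ih hl, mul_one, hB.apply_mul_gen (gen_mem_notInvolving (by simp)),
      ← one_mul (gen K _ _), hB.apply_mul_gen (one_mem _)]

end IteratedIntegral

theorem IsBerezinFamily.iteratedBerezin_prod_one_add {K : Type} [Field K] {n : ℕ}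
    {B : Fin n ⊕ Fin n → (Gr K (Fin n ⊕ Fin n) →ₗ[K] Gr K (Fin n ⊕ Fin n))}
    (hB : IsBerezinFamily K (Fin n ⊕ Fin n) B) (r : Fin n → Gr K (Fin n ⊕ Fin n))
    (hr : ∀ i j, i ≠ j → r i ∈ notInvolving K _ (Sum.inl j)) :
    iteratedBerezin B (List.finRange n) (List.ofFn fun i => 1 + r i).prod =
      iteratedBerezin B (List.finRange n) (List.ofFn r).prod := by
  have hexpand : (List.ofFn fun i => 1 + r i).prod =
      ∑ s : Finset (Fin n), (List.ofFn (s.piecewise 1 r)).prod := by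
    have h := (MultilinearMap.mkPiAlgebraFin K n _).map_add_univ 1 r
    simp only [MultilinearMap.mkPiAlgebraFin_apply] at h
    exact h
  rw [hexpand, map_sum, Finset.sum_eq_single ∅ _ (by simp), Finset.piecewise_empty]
  intro s _ hs
  obtain ⟨j, hj⟩ := Finset.nonempty_iff_ne_empty.2 hs
  refine hB.iteratedBerezin_eq_zero (List.mem_finRange j) (Subalgebra.list_prod_mem _ ?_)
  simp only [List.mem_ofFn, forall_exists_index, forall_apply_eq_imp_iff]
  intro i
  by_cases hi : i ∈ s
  · rw [Finset.piecewise_eq_of_mem _ _ _ hi]; exact one_mem _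
  · rw [Finset.piecewise_eq_of_notMem _ _ _ hi]; exact hr i j (by rintro rfl; exact hi hj)

section PairedProduct

variable (K : Type) [Field K] (n : ℕ)

def starCombination : (Fin n → K) →ₗ[K] Gr K (Fin n ⊕ Fin n) :=
  ExteriorAlgebra.ι K ∘ₗ Fintype.linearCombination K fun j => Pi.single (Sum.inr j) 1

variable {K n}

theorem starCombination_apply (w : Fin n → K) :
    starCombination K n w = ∑ j, w j • gen K (Fin n ⊕ Fin n) (Sum.inr j) := by
  simp [starCombination, Fintype.linearCombination_apply, gen]

theorem starCombination_single (j : Fin n) :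
    starCombination K n (Pi.single j 1) = gen K (Fin n ⊕ Fin n) (Sum.inr j) := by
  simp [starCombination, gen]

theorem commute_gen_mul_starCombination (i i' : Fin n) (w w' : Fin n → K) :
    Commute (gen K _ (Sum.inl i) * starCombination K n w)
      (gen K _ (Sum.inl i') * starCombination K n w') :=
  ExteriorAlgebra.commute_ι_mul_ι _ _ _ _

theorem gen_mul_starCombination_mul_self (i i' : Fin n) (w : Fin n → K) :
    gen K _ (Sum.inl i) * starCombination K n w * (gen K _ (Sum.inl i') * starCombination K n w)
      = 0 :=
  ExteriorAlgebra.ι_mul_ι_mul_ι_mul_ι_self _ _ _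

variable (K n)

def pairedProduct : (Fin n → K) [⋀^Fin n]→ₗ[K] Gr K (Fin n ⊕ Fin n) where
  toMultilinearMap := (MultilinearMap.mkPiAlgebraFin K n _).compLinearMap fun i =>
    LinearMap.mulLeft K (gen K _ (Sum.inl i)) ∘ₗ starCombination K n
  map_eq_zero_of_eq' w i j hw hij := List.prod_ofFn_eq_zero_of_commute _
    (fun _ _ => commute_gen_mul_starCombination _ _ _ _) hij <| by
      simp only [LinearMap.comp_apply, LinearMap.mulLeft_apply, hw]
      exact gen_mul_starCombination_mul_self _ _ _

variable {K n}

theorem pairedProduct_apply (w : Fin n → Fin n → K) :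
    pairedProduct K n w =
      (List.ofFn fun i => gen K _ (Sum.inl i) * starCombination K n (w i)).prod := rfl

theorem pairedProduct_eq_det_smul (M : Matrix (Fin n) (Fin n) K) :
    pairedProduct K n (fun i => M i) = M.det •
      (List.ofFn fun i => gen K (Fin n ⊕ Fin n) (Sum.inl i) * gen K _ (Sum.inr i)).prod := by
  rw [(pairedProduct K n).apply_eq_det_smul (Pi.basisFun K (Fin n)), Pi.basisFun_det,
    pairedProduct_apply]
  simp only [Pi.basisFun_apply, starCombination_single]
  rfl

end PairedProduct

/-- Let `a_1, …, a_n, a_1*, …, a_n*` be `2n` Grassmann generators (indexed by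
`Fin n ⊕ Fin n`: `Sum.inl i ↦ a_{i+1}`, `Sum.inr j ↦ a_{j+1}*`), let `M` be an `n × n`
matrix over a field `K` of characteristic zero, and set `f = Σ_{i,j} M_{ij} a_i a_j*`.
Then the iterated Berezin integral `∫ exp f  da_n* da_n ⋯ da_1* da_1` equals `det M`. -/
theorem berezin_integral_exp_eq_det (K : Type) [Field K] [CharZero K] (n : ℕ)
    (M : Matrix (Fin n) (Fin n) K)
    (B : (Fin n ⊕ Fin n) → (Gr K (Fin n ⊕ Fin n) →ₗ[K] Gr K (Fin n ⊕ Fin n)))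
    (hB : IsBerezinFamily K (Fin n ⊕ Fin n) B) :
    (List.finRange n).foldr (fun i acc => B (Sum.inl i) (B (Sum.inr i) acc))
        (gexp K (Fin n ⊕ Fin n) (2 * n + 1)
          (∑ i : Fin n, ∑ j : Fin n,
            M i j • (gen K (Fin n ⊕ Fin n) (Sum.inl i) * gen K (Fin n ⊕ Fin n) (Sum.inr j)))) =
      M.det • (1 : Gr K (Fin n ⊕ Fin n)) := by
  set r : Fin n → Gr K (Fin n ⊕ Fin n) := fun i => gen K _ (Sum.inl i) * starCombination K n (M i)
  have hf : ∑ i : Fin n, ∑ j : Fin n,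
      M i j • (gen K (Fin n ⊕ Fin n) (Sum.inl i) * gen K (Fin n ⊕ Fin n) (Sum.inr j)) =
        ∑ i, r i := by
    simp only [r, starCombination_apply, Finset.mul_sum, mul_smul_comm]
  have hr : ∀ i j, i ≠ j → r i ∈ notInvolving K _ (Sum.inl j) := fun i j hij =>
    mul_mem (gen_mem_notInvolving (by simpa using hij)) <| by
      rw [starCombination_apply]
      exact sum_mem fun k _ => Subalgebra.smul_mem _ (gen_mem_notInvolving (by simp)) _
  have hprod : (List.ofFn r).prod = pairedProduct K n (fun i => M i) := rfl
  rw [foldr_eq_iteratedBerezin, hf,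
    gexp_sum_fin_eq_prod_one_add r (fun _ _ => commute_gen_mul_starCombination _ _ _ _)
      (fun _ => gen_mul_starCombination_mul_self _ _ _) (by omega),
    hB.iteratedBerezin_prod_one_add r hr, hprod, pairedProduct_eq_det_smul,
    map_smul, List.ofFn_eq_map, hB.iteratedBerezin_prod_gen_mul_gen (List.nodup_finRange n)]
end
end

section
/- Let f = Σ_{i,j} M_{ij} a_i a_j* be the bilinear form in Grassmann generators associated with an N×N matrix M over a field of characteristic zero. Then for any n and indices i_1 < ⋯ < i_n and j_1 < ⋯ < j_n, the coefficient of the monomial a_{i_1} a_{j_1}* a_{i_2} a_{j_2}* ⋯ a_{i_n} a_{j_n}* in the expansion of exp(f) in the standard monomial basis equals the minor of M formed by rows i_1,...,i_n and columns j_1,...,j_n. -/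
/-!
Expanding `f ^ k` multilinearly writes it as a sum, over sequences `d` of `k` index pairs, of
`(∏ₜ M (d t)) • a_{d₁} a*_{d₁'} ⋯ a_{dₖ} a*_{dₖ'}`. Up to sign such a product of generators is a
basis vector, so it contributes to the coefficient of `a_{i₁} a*_{j₁} ⋯ a_{iₙ} a*_{jₙ}` only if
`k = n` and its rows and columns are `i ∘ π` and `j ∘ τ` for permutations `π, τ`; it is then
`sign π * sign τ` times that monomial. Summing over `(π, τ)` gives `n! * det`, and the `1 / n!`
of the exponential cancels the `n!`.
-/

noncomputable section

open ExteriorAlgebra Function Equiv Finset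

namespace ExteriorAlgebra

variable {R M α : Type*} [CommRing R] [AddCommGroup M] [Module R M]

theorem exists_prod_map_ι_eq_smul_of_perm (f : α → M) {l₁ l₂ : List α} (h : l₁.Perm l₂) :
    ∃ ε : ℤˣ, (l₁.map fun a => ι R (f a)).prod = ε • (l₂.map fun a => ι R (f a)).prod := by
  induction h with
  | nil => exact ⟨1, by simp⟩
  | cons a _ ih =>
    obtain ⟨ε, hε⟩ := ih
    exact ⟨ε, by simp only [List.map_cons, List.prod_cons, hε, mul_smul_comm]⟩
  | swap a a' l =>
    refine ⟨-1, ?_⟩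
    simp only [List.map_cons, List.prod_cons, ← mul_assoc]
    rw [eq_neg_of_add_eq_zero_left (ι_add_mul_swap (f a') (f a)), neg_mul, Units.neg_smul, one_smul]
  | trans _ _ ih₁ ih₂ =>
    obtain ⟨ε₁, h₁⟩ := ih₁
    obtain ⟨ε₂, h₂⟩ := ih₂
    exact ⟨ε₁ * ε₂, by rw [h₁, h₂, mul_smul]⟩

theorem prod_map_ι_eq_zero_of_not_nodup (f : α → M) {l : List α} (h : ¬l.Nodup) :
    (l.map fun a => ι R (f a)).prod = 0 := by
  obtain ⟨a, ha⟩ : ∃ a, [a, a].Sublist l := by simpa [List.nodup_iff_sublist] using h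
  obtain ⟨l', hl'⟩ := ha.exists_perm_append
  obtain ⟨ε, hε⟩ := exists_prod_map_ι_eq_smul_of_perm (R := R) f hl'
  simp [hε, ← mul_assoc]

end ExteriorAlgebra

theorem exists_equiv_comp_of_range_eq {γ : Type*} {k n : ℕ} {u : Fin k → γ} {v : Fin n → γ}
    (hu : Injective u) (hv : Injective v) (h : Set.range u = Set.range v) :
    ∃ σ : Fin k ≃ Fin n, u = v ∘ σ := by
  refine ⟨(ofInjective u hu).trans ((setCongr h).trans (ofInjective v hv).symm), funext fun t => ?_⟩
  simp only [comp_apply, trans_apply]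
  rw [apply_ofInjective_symm hv]
  rfl

section MonomialBasis

variable {K : Type} [Field K] {I : Type} [DecidableEq I]

def IsMonomialBasis (b : Module.Basis (Finset I) K (Gr K I)) : Prop :=
  ∀ s : Finset I, ∃ l : List I, l.Nodup ∧ l.toFinset = s ∧ b s = (l.map (gen K I)).prod

variable {b : Module.Basis (Finset I) K (Gr K I)}

theorem IsMonomialBasis.repr_prod_map_gen_eq_zero (hb : IsMonomialBasis b) {l : List I}
    {S : Finset I} (hS : l.toFinset ≠ S) : b.repr (l.map (gen K I)).prod S = 0 := by
  by_cases hl : l.Nodup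
  · obtain ⟨l', hl', hl'l, hbl'⟩ := hb l.toFinset
    obtain ⟨ε, hε⟩ := exists_prod_map_ι_eq_smul_of_perm (R := K)
      (fun x : I => (Pi.single x 1 : I → K)) (List.perm_of_nodup_nodup_toFinset_eq hl hl' hl'l.symm)
    have : (l.map (gen K I)).prod = ε • b l.toFinset := by rw [hbl']; exact hε
    rw [this, Units.smul_def, map_zsmul, b.repr_self, Finsupp.smul_apply,
      Finsupp.single_eq_of_ne hS.symm, smul_zero]
  · have : (l.map (gen K I)).prod = 0 := prod_map_ι_eq_zero_of_not_nodup _ hl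
    rw [this, map_zero, Finsupp.zero_apply]

theorem IsMonomialBasis.repr_ιMulti_eq_zero (hb : IsMonomialBasis b) {m : ℕ} (u : Fin m → I)
    {S : Finset I} (hS : univ.image u ≠ S) :
    b.repr (ιMulti K m fun i => Pi.single (u i) 1) S = 0 := by
  have hu : (List.ofFn fun i => ι K (Pi.single (u i) (1 : K))) = (List.ofFn u).map (gen K I) := by
    rw [List.map_ofFn]; rfl
  rw [ιMulti_apply, hu]
  refine hb.repr_prod_map_gen_eq_zero (ne_of_eq_of_ne ?_ hS)
  ext x
  simp [List.mem_ofFn]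

end MonomialBasis

section PairMonomial

variable {K : Type} [Field K] {α β : Type} [DecidableEq α] [DecidableEq β] {k n : ℕ}

variable (K) in
def pairMonomial (d : Fin k → α × β) : Gr K (α ⊕ β) :=
  (List.ofFn fun t => gen K (α ⊕ β) (.inl (d t).1) * gen K (α ⊕ β) (.inr (d t).2)).prod

-- Indexing by `Fin k × Fin 2` lets row and column permutations act separately (`prodCongrLeft`).
def pairSeq (d : Fin k → α × β) (p : Fin k × Fin 2) : α ⊕ β :=
  ![.inl (d p.1).1, .inr (d p.1).2] p.2

theorem pairMonomial_eq_ιMulti (d : Fin k → α × β) :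
    pairMonomial K d =
      ιMulti K (k * 2) fun i => Pi.single (pairSeq d (finProdFinEquiv.symm i)) 1 := by
  have hsymm (t : Fin k) (e : Fin 2) (h : (t : ℕ) * 2 + e < k * 2) :
      finProdFinEquiv.symm ⟨t * 2 + e, h⟩ = (t, e) :=
    finProdFinEquiv.symm_apply_eq.mpr (Fin.ext (by simp [add_comm, mul_comm]))
  rw [ιMulti_apply, List.ofFn_mul, List.prod_flatten, List.map_ofFn]
  simp [pairMonomial, pairSeq, gen, hsymm, comp_def, -finProdFinEquiv_symm_apply]

theorem pairMonomial_comp_perm (d : Fin k → α × β) (π τ : Perm (Fin k)) :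
    pairMonomial K (fun t => ((d (π t)).1, (d (τ t)).2)) =
      (Perm.sign π * Perm.sign τ) • pairMonomial K d := by
  set σ : Perm (Fin k × Fin 2) := prodCongrLeft ![π, τ]
  have hσ : Perm.sign (finProdFinEquiv.permCongr σ) = Perm.sign π * Perm.sign τ := by
    simp [σ, Perm.sign_prodCongrLeft, Fin.prod_univ_two]
  rw [pairMonomial_eq_ιMulti, pairMonomial_eq_ιMulti, ← hσ, ← AlternatingMap.map_perm]
  congr
  funext i
  obtain ⟨⟨t, e⟩, rfl⟩ := finProdFinEquiv.surjective i
  fin_cases e <;> simp [pairSeq, σ, permCongr_apply, -finProdFinEquiv_symm_apply]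

theorem IsMonomialBasis.exists_equiv_of_repr_pairMonomial_ne_zero
    {b : Module.Basis (Finset (α ⊕ β)) K (Gr K (α ⊕ β))} (hb : IsMonomialBasis b)
    {row : Fin n → α} {col : Fin n → β} (hrow : Injective row) (hcol : Injective col)
    {d : Fin k → α × β}
    (h : b.repr (pairMonomial K d) (univ.image (Sum.inl ∘ row) ∪ univ.image (Sum.inr ∘ col)) ≠ 0) :
    ∃ σ τ : Fin k ≃ Fin n, ∀ t, d t = (row (σ t), col (τ t)) := by
  rw [pairMonomial_eq_ιMulti] at h
  have hinj : Injective (pairSeq d) := by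
    by_contra hd
    have : ¬Injective fun i => (Pi.single (pairSeq d (finProdFinEquiv.symm i)) 1 : α ⊕ β → K) :=
      fun hv => hd ((EquivLike.injective_comp finProdFinEquiv.symm _).mp
        (hv.of_comp (f := fun x => Pi.single x 1)))
    rw [AlternatingMap.map_eq_zero_of_not_injective _ _ this, map_zero,
      Finsupp.zero_apply] at h
    exact h rfl
  have himg : univ.image (pairSeq d) = univ.image (Sum.inl ∘ row) ∪ univ.image (Sum.inr ∘ col) := by
    by_contra hne
    refine h (hb.repr_ιMulti_eq_zero _ (ne_of_eq_of_ne ?_ hne))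
    rw [show (fun i => pairSeq d (finProdFinEquiv.symm i)) = pairSeq d ∘ finProdFinEquiv.symm
      from rfl, ← image_image, image_univ_equiv]
  have hrows : Set.range (fun t => (d t).1) = Set.range row := by
    ext x
    simpa [pairSeq, Fin.exists_fin_two] using congrArg (Sum.inl x ∈ ·) himg
  have hcols : Set.range (fun t => (d t).2) = Set.range col := by
    ext x
    simpa [pairSeq, Fin.exists_fin_two] using congrArg (Sum.inr x ∈ ·) himg
  have hfst : Injective fun t => (d t).1 := fun t t' h =>
    congrArg Prod.fst (hinj (a₁ := (t, 0)) (a₂ := (t', 0)) (by simp [pairSeq, h]))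
  have hsnd : Injective fun t => (d t).2 := fun t t' h =>
    congrArg Prod.fst (hinj (a₁ := (t, 1)) (a₂ := (t', 1)) (by simp [pairSeq, h]))
  obtain ⟨σ, hσ⟩ := exists_equiv_comp_of_range_eq hfst hrow hrows
  obtain ⟨τ, hτ⟩ := exists_equiv_comp_of_range_eq hsnd hcol hcols
  exact ⟨σ, τ, fun t => Prod.ext (congrFun hσ t) (congrFun hτ t)⟩

end PairMonomial

theorem sum_smul_pow_eq_sum_prod_ofFn {R A ι : Type*} [CommSemiring R] [Semiring A] [Algebra R A]
    [Fintype ι] (c : ι → R) (x : ι → A) (k : ℕ) :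
    (∑ i, c i • x i) ^ k = ∑ d : Fin k → ι, (∏ t, c (d t)) • (List.ofFn fun t => x (d t)).prod := by
  induction k with
  | zero => simp
  | succ k ih =>
    rw [pow_succ', ih, Finset.sum_mul_sum, ← Fintype.sum_prod_type',
      ← (Fin.consEquiv fun _ => ι).sum_comp]
    refine Fintype.sum_congr _ _ fun p => ?_
    simp [Fin.prod_univ_succ, List.ofFn_succ, smul_smul, mul_comm]

theorem Matrix.sum_sign_mul_sign_smul_prod_eq_factorial_smul_det {R ι : Type*} [CommRing R]
    [Fintype ι] [DecidableEq ι] (A : Matrix ι ι R) :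
    ∑ q : Perm ι × Perm ι, (Perm.sign q.1 * Perm.sign q.2) • ∏ t, A (q.1 t) (q.2 t) =
      (Fintype.card ι).factorial • A.det := by
  have hπ (π : Perm ι) :
      ∑ τ : Perm ι, (Perm.sign π * Perm.sign τ) • ∏ t, A (π t) (τ t) = A.det := by
    simp_rw [mul_smul, ← Finset.smul_sum]
    have : ∑ τ : Perm ι, Perm.sign τ • ∏ t, A (π t) (τ t) = (A.submatrix π id).det := by
      rw [← Matrix.det_transpose, Matrix.det_apply]; rfl
    rw [this, Matrix.det_permute, Units.smul_def, zsmul_eq_mul, ← mul_assoc, ← Int.cast_mul,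
      ← Units.val_mul, Int.units_mul_self, Units.val_one, Int.cast_one, one_mul]
  rw [Fintype.sum_prod_type, Fintype.sum_congr _ _ hπ, Finset.sum_const, Finset.card_univ,
    Fintype.card_perm]

section BilinearForm

variable {K : Type} [Field K] {α β : Type} [Fintype α] [Fintype β] [DecidableEq α]
  [DecidableEq β]

theorem pow_bilinear_eq_sum_pairMonomial (M : Matrix α β K) (k : ℕ) :
    (∑ i, ∑ j, M i j • (gen K (α ⊕ β) (.inl i) * gen K (α ⊕ β) (.inr j))) ^ k =
      ∑ d : Fin k → α × β, (∏ t, M (d t).1 (d t).2) • pairMonomial K d := by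
  rw [← Fintype.sum_prod_type', sum_smul_pow_eq_sum_prod_ofFn]
  rfl

variable {b : Module.Basis (Finset (α ⊕ β)) K (Gr K (α ⊕ β))} {n : ℕ} {row : Fin n → α}
  {col : Fin n → β}

theorem IsMonomialBasis.repr_pow_bilinear_eq_zero (hb : IsMonomialBasis b) (hrow : Injective row)
    (hcol : Injective col) (M : Matrix α β K) {k : ℕ} (hk : k ≠ n) :
    b.repr ((∑ i, ∑ j, M i j • (gen K (α ⊕ β) (.inl i) * gen K (α ⊕ β) (.inr j))) ^ k)
      (univ.image (Sum.inl ∘ row) ∪ univ.image (Sum.inr ∘ col)) = 0 := by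
  rw [pow_bilinear_eq_sum_pairMonomial, map_sum, Finsupp.finsetSum_apply]
  refine Finset.sum_eq_zero fun d _ => ?_
  rw [map_smul, Finsupp.smul_apply]
  by_contra h
  obtain ⟨σ, -, -⟩ :=
    hb.exists_equiv_of_repr_pairMonomial_ne_zero hrow hcol (right_ne_zero_of_smul h)
  exact hk (by simpa using Fintype.card_congr σ)

theorem IsMonomialBasis.repr_pow_bilinear_self (hb : IsMonomialBasis b) (hrow : Injective row)
    (hcol : Injective col) (M : Matrix α β K) :
    b.repr ((∑ i, ∑ j, M i j • (gen K (α ⊕ β) (.inl i) * gen K (α ⊕ β) (.inr j))) ^ n)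
      (univ.image (Sum.inl ∘ row) ∪ univ.image (Sum.inr ∘ col)) =
      n.factorial • (M.submatrix row col).det *
        b.repr (pairMonomial K fun t => (row t, col t))
          (univ.image (Sum.inl ∘ row) ∪ univ.image (Sum.inr ∘ col)) := by
  set e : Perm (Fin n) × Perm (Fin n) → Fin n → α × β := fun q t => (row (q.1 t), col (q.2 t))
  have he : Injective e := fun q q' h => Prod.ext
    (Equiv.ext fun t => hrow (congrArg Prod.fst (congrFun h t)))
    (Equiv.ext fun t => hcol (congrArg Prod.snd (congrFun h t)))
  have hvanish (d : Fin n → α × β) (hd : d ∉ Set.range e) :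
      (∏ t, M (d t).1 (d t).2) • b.repr (pairMonomial K d)
        (univ.image (Sum.inl ∘ row) ∪ univ.image (Sum.inr ∘ col)) = 0 := by
    by_contra h
    obtain ⟨σ, τ, hστ⟩ :=
      hb.exists_equiv_of_repr_pairMonomial_ne_zero hrow hcol (right_ne_zero_of_smul h)
    exact hd ⟨(σ, τ), funext fun t => (hστ t).symm⟩
  have hterm (q : Perm (Fin n) × Perm (Fin n)) :
      (∏ t, M (e q t).1 (e q t).2) • b.repr (pairMonomial K (e q))
        (univ.image (Sum.inl ∘ row) ∪ univ.image (Sum.inr ∘ col)) =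
      (Perm.sign q.1 * Perm.sign q.2) • (∏ t, M.submatrix row col (q.1 t) (q.2 t)) *
        b.repr (pairMonomial K fun t => (row t, col t))
          (univ.image (Sum.inl ∘ row) ∪ univ.image (Sum.inr ∘ col)) := by
    have hperm : pairMonomial K (e q) =
        (Perm.sign q.1 * Perm.sign q.2) • pairMonomial K fun t => (row t, col t) :=
      pairMonomial_comp_perm (fun t => (row t, col t)) q.1 q.2
    rw [hperm, Units.smul_def, Units.smul_def, map_zsmul, Finsupp.smul_apply]
    simp only [zsmul_eq_mul, smul_eq_mul, Matrix.submatrix_apply]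
    ring
  rw [pow_bilinear_eq_sum_pairMonomial, map_sum, Finsupp.finsetSum_apply]
  simp only [map_smul, Finsupp.smul_apply]
  rw [← Fintype.sum_of_injective e he _ _ hvanish fun q => (hterm q).symm, ← Finset.sum_mul,
    Matrix.sum_sign_mul_sign_smul_prod_eq_factorial_smul_det, Fintype.card_fin]

end BilinearForm

/-- Let `f = Σ_{i,j} M_{ij} a_i a_j*` be the bilinear form in the Grassmann generators
`a_1,…,a_N, a_1*,…,a_N*` (indexed by `Fin N ⊕ Fin N`) associated with an `N × N` matrix
`M` over a field of characteristic zero.  Expand `exp f` in a monomial basis `b` indexed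
by finite sets of generators, where each basis vector is a product of the distinct
generators of the corresponding set (hypothesis `hb`), and where the basis vector at the
set `{a_{i_1},…,a_{i_n}, a_{j_1}*,…,a_{j_n}*}` is the interleaved monomial
`a_{i_1} a_{j_1}* ⋯ a_{i_n} a_{j_n}*` (hypothesis `hS`), for `i_1 < ⋯ < i_n` and
`j_1 < ⋯ < j_n`.  Then the coefficient of this monomial equals the minor of `M` with
rows `i_1,…,i_n` and columns `j_1,…,j_n`. -/
theorem exp_coefficient_eq_minor (K : Type) [Field K] [CharZero K] (N : ℕ)
    (M : Matrix (Fin N) (Fin N) K)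
    (b : Module.Basis (Finset (Fin N ⊕ Fin N)) K (Gr K (Fin N ⊕ Fin N)))
    (hb : ∀ s : Finset (Fin N ⊕ Fin N), ∃ l : List (Fin N ⊕ Fin N),
        l.Nodup ∧ l.toFinset = s ∧ b s = (l.map (gen K (Fin N ⊕ Fin N))).prod)
    (n : ℕ) (row col : Fin n → Fin N) (hrow : StrictMono row) (hcol : StrictMono col)
    (hS : b (Finset.univ.image (Sum.inl ∘ row) ∪ Finset.univ.image (Sum.inr ∘ col)) =
        ((List.finRange n).map fun k =>
          gen K (Fin N ⊕ Fin N) (Sum.inl (row k)) *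
            gen K (Fin N ⊕ Fin N) (Sum.inr (col k))).prod) :
    b.repr
        (gexp K (Fin N ⊕ Fin N) (2 * N + 1)
          (∑ i : Fin N, ∑ j : Fin N,
            M i j • (gen K (Fin N ⊕ Fin N) (Sum.inl i) * gen K (Fin N ⊕ Fin N) (Sum.inr j))))
        (Finset.univ.image (Sum.inl ∘ row) ∪ Finset.univ.image (Sum.inr ∘ col)) =
      (M.submatrix row col).det := by
  have hmono : IsMonomialBasis b := hb
  have hone : b.repr (pairMonomial K fun t => (row t, col t))
      (univ.image (Sum.inl ∘ row) ∪ univ.image (Sum.inr ∘ col)) = 1 := by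
    rw [pairMonomial, List.ofFn_eq_map, ← hS, b.repr_self, Finsupp.single_eq_same]
  have hn : n < 2 * N + 1 := by
    have := Fintype.card_le_of_injective row hrow.injective
    simp only [Fintype.card_fin] at this
    omega
  rw [gexp, map_sum, Finsupp.finsetSum_apply, Finset.sum_eq_single n]
  · rw [map_smul, Finsupp.smul_apply, hmono.repr_pow_bilinear_self hrow.injective hcol.injective,
      hone, mul_one, nsmul_eq_mul, smul_eq_mul,
      inv_mul_cancel_left₀ (Nat.cast_ne_zero.mpr n.factorial_ne_zero)]
  · intro k _ hk
    rw [map_smul, Finsupp.smul_apply,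
      hmono.repr_pow_bilinear_eq_zero hrow.injective hcol.injective M hk, smul_zero]
  · exact fun h => absurd (mem_range.mpr hn) h
end
end
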